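/- arXiv:1407.2134 — 2 statements merged into one kernel-verified Lean document; each statement's English description precedes it below -/
import Mathlib

section
/- Let a be an even positive integer and let d be an integer. Then Σ_{n=0}^{a-1} e^{iπ(2dn - n²)/a} = √a · e^{iπ(d²/a - 1/4)}, where √a denotes the positive real square root of a. -/
/-!
Completing the square, `2dn - n² = d² - (n - d)²`, and the `a`-periodicity of `n ↦ e^{-πin²/a}`
for even `a` reduce the claim to the Gauss sum `G = ∑_{r<a} e^{-πir²/a} = √a e^{-πi/4}`.
This is read off from `θ(τ) = ∑ₙ e^{πin²τ}` near the cusp `-1/a`, at `τ = -1/a + i/(a²s)`.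
Splitting `n` into residue classes mod `a` and applying the theta inversion to each class gives
`θ(τ) = √s ∑_r e^{-πir²/a} θ(r/a, is)`, while the transformation `τ ↦ τ/(aτ + 1)` of the theta
group (two inversions around a translation by the even integer `a`) gives
`θ(τ) = √(as) e^{-πi/4} θ(1/a + is)`. As `s → ∞` all theta values tend to `1`.
-/

open Complex Filter Finset Topology
open scoped Real

namespace Complex

lemma mul_cpow_of_re_pos {x y : ℂ} (hx : 0 < x.re) (hy : 0 < y.re) (s : ℂ) :
    (x * y) ^ s = x ^ s * y ^ s := by
  have hx₀ : x ≠ 0 := fun h => by simp [h] at hx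
  have hy₀ : y ≠ 0 := fun h => by simp [h] at hy
  obtain ⟨hx₁, hx₂⟩ := abs_lt.mp (abs_arg_lt_pi_div_two_iff.mpr (Or.inl hx))
  obtain ⟨hy₁, hy₂⟩ := abs_lt.mp (abs_arg_lt_pi_div_two_iff.mpr (Or.inl hy))
  rw [cpow_def_of_ne_zero (mul_ne_zero hx₀ hy₀), cpow_def_of_ne_zero hx₀, cpow_def_of_ne_zero hy₀,
    log_mul hx₀ hy₀ ⟨by linarith, by linarith⟩, add_mul, exp_add]

lemma ofReal_cpow_one_half {x : ℝ} (hx : 0 ≤ x) : (x : ℂ) ^ (1 / 2 : ℂ) = Real.sqrt x := by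
  rw [Real.sqrt_eq_rpow, ofReal_cpow hx]
  norm_num

lemma ofReal_mul_I_cpow_one_half {r : ℝ} (hr : 0 < r) :
    ((r : ℂ) * I) ^ (1 / 2 : ℂ) = Real.sqrt r * cexp (π * I / 4) := by
  rw [cpow_def_of_ne_zero (mul_ne_zero (ofReal_ne_zero.mpr hr.ne') I_ne_zero),
    log_ofReal_mul hr I_ne_zero, log_I, add_mul, exp_add, Real.sqrt_eq_rpow,
    Real.rpow_def_of_pos hr, ofReal_exp]
  push_cast
  ring_nf

lemma im_neg_one_div_pos {τ : ℂ} (hτ : 0 < τ.im) : 0 < (-1 / τ).im := by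
  rw [neg_div, neg_im, one_div, inv_im, neg_div, neg_neg]
  exact div_pos hτ (normSq_pos.mpr (fun h => by simp [h] at hτ))

end Complex

lemma jacobiTheta₂_add_intCast_left (z τ : ℂ) (n : ℤ) :
    jacobiTheta₂ (z + n) τ = jacobiTheta₂ z τ := by
  simpa using (show Function.Periodic (jacobiTheta₂ · τ) 1 from
    fun z => jacobiTheta₂_add_left z τ).int_mul n z

lemma jacobiTheta₂_add_two_mul_intCast_right (z τ : ℂ) (n : ℤ) :
    jacobiTheta₂ z (τ + 2 * n) = jacobiTheta₂ z τ := by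
  rw [mul_comm]
  exact (show Function.Periodic (jacobiTheta₂ z) 2 from jacobiTheta₂_add_right z).int_mul n τ

lemma jacobiTheta₂_term_mul_add (a q r : ℤ) (z τ : ℂ) :
    jacobiTheta₂_term (q * a + r) z τ =
      cexp (2 * π * I * r * z + π * I * r ^ 2 * τ) *
        jacobiTheta₂_term q (a * z + r * a * τ) (a ^ 2 * τ) := by
  simp only [jacobiTheta₂_term, ← exp_add]
  push_cast
  ring_nf

lemma jacobiTheta₂_eq_sum_range (a : ℕ) [NeZero a] (z : ℂ) {τ : ℂ} (hτ : 0 < τ.im) :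
    jacobiTheta₂ z τ = ∑ r ∈ range a, cexp (2 * π * I * r * z + π * I * r ^ 2 * τ) *
      jacobiTheta₂ (a * z + r * a * τ) (a ^ 2 * τ) := by
  have ha₀ : (0 : ℝ) < a := by exact_mod_cast Nat.pos_of_neZero a
  have haτ : 0 < ((a : ℂ) ^ 2 * τ).im := by
    rw [← ofReal_natCast, ← ofReal_pow, im_ofReal_mul]; positivity
  let e : Fin a × ℤ ≃ ℤ := (Equiv.prodComm _ _).trans (Int.divModEquiv a).symm
  have hsum : HasSum (fun p : Fin a × ℤ => jacobiTheta₂_term (p.2 * a + (p.1 : ℕ)) z τ)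
      (jacobiTheta₂ z τ) :=
    (e.hasSum_iff (f := (jacobiTheta₂_term · z τ))).mpr (hasSum_jacobiTheta₂_term z hτ)
  have hfib : ∀ r : Fin a, HasSum (fun q : ℤ => jacobiTheta₂_term (q * a + (r : ℕ)) z τ)
      (cexp (2 * π * I * (r : ℕ) * z + π * I * (r : ℕ) ^ 2 * τ) *
        jacobiTheta₂ (a * z + (r : ℕ) * a * τ) (a ^ 2 * τ)) := fun r => by
    simp_rw [jacobiTheta₂_term_mul_add]
    push_cast
    exact (hasSum_jacobiTheta₂_term _ haτ).mul_left _
  rw [← Fin.sum_univ_eq_sum_range (fun r => cexp (2 * π * I * r * z + π * I * r ^ 2 * τ) *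
      jacobiTheta₂ (a * z + r * a * τ) (a ^ 2 * τ))]
  exact (hsum.prod_fiberwise hfib).unique (hasSum_fintype _)

lemma jacobiTheta₂_zero_div_two_mul_add_one (k : ℤ) {τ : ℂ} (hτ : 0 < τ.im) :
    jacobiTheta₂ 0 (τ / (2 * k * τ + 1)) = (2 * k * τ + 1) ^ (1 / 2 : ℂ) * jacobiTheta₂ 0 τ := by
  have hτ₀ : τ ≠ 0 := fun h => by simp [h] at hτ
  set w := -1 / τ - 2 * k with hw
  have hw_im : 0 < w.im := by simpa [hw] using im_neg_one_div_pos hτ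
  have hw₀ : w ≠ 0 := fun h => by simp [h] at hw_im
  -- both factors lie in the right half-plane, so their principal square roots multiply
  have hprod : -I * τ * (-I * w) = 2 * k * τ + 1 := by
    rw [hw]; field_simp; ring_nf; rw [I_sq]; ring
  have hinv : -1 / w = τ / (2 * k * τ + 1) := by
    rw [← hprod]; field_simp; ring_nf; rw [I_sq]; ring
  have hre : ∀ {σ : ℂ}, 0 < σ.im → 0 < (-I * σ).re := fun h => by simpa using h
  have hFE := jacobiTheta₂_functional_equation 0 τ
  have hFE' := jacobiTheta₂_functional_equation 0 w
  simp only [zero_pow two_ne_zero, mul_zero, zero_div, exp_zero, mul_one] at hFE hFE'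
  rw [hFE, show -1 / τ = w + 2 * k by rw [hw]; ring, jacobiTheta₂_add_two_mul_intCast_right, hFE',
    hinv, ← hprod, mul_cpow_of_re_pos (hre hτ) (hre hw_im)]
  field_simp

lemma jacobiTheta₂_I_div {s : ℝ} (hs : 0 < s) (z : ℂ) :
    jacobiTheta₂ z (I / s) =
      Real.sqrt s * cexp (-π * s * z ^ 2) * jacobiTheta₂ (-I * s * z) (I * s) := by
  have hs₀ : (s : ℂ) ≠ 0 := ofReal_ne_zero.mpr hs.ne'
  rw [jacobiTheta₂_functional_equation, show -I * (I / s) = ((s⁻¹ : ℝ) : ℂ) by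
      push_cast; field_simp; rw [I_sq]; ring,
    ofReal_cpow_one_half (by positivity), Real.sqrt_inv]
  congr 2
  · push_cast; field_simp
  · congr 1; field_simp
  · field_simp; ring_nf; rw [I_sq]; ring
  · field_simp; rw [I_sq]

lemma im_neg_one_div_add_I_div_pos {a : ℕ} (ha : 0 < a) {s : ℝ} (hs : 0 < s) :
    0 < (-1 / a + I / (a ^ 2 * s) : ℂ).im := by
  rw [show (a : ℂ) ^ 2 * s = (((a : ℝ) ^ 2 * s : ℝ) : ℂ) by push_cast; rfl, add_im,
    div_ofReal_im]
  simp only [div_natCast_im, neg_im, one_im, neg_zero, zero_div, I_im, zero_add]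
  positivity

lemma jacobiTheta₂_zero_neg_one_div_add_eq_sum {a : ℕ} (ha : 0 < a) (hae : Even a) {s : ℝ}
    (hs : 0 < s) :
    jacobiTheta₂ 0 (-1 / a + I / (a ^ 2 * s)) =
      Real.sqrt s * ∑ r ∈ range a, cexp (-π * I * r ^ 2 / a) * jacobiTheta₂ (r / a) (I * s) := by
  obtain ⟨b, hb⟩ := hae
  have : NeZero a := ⟨ha.ne'⟩
  have ha₀ : (a : ℂ) ≠ 0 := Nat.cast_ne_zero.mpr ha.ne'
  have hs₀ : (s : ℂ) ≠ 0 := ofReal_ne_zero.mpr hs.ne'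
  have hb' : ((b : ℤ) : ℂ) = a / 2 := by rw [hb]; push_cast; ring
  set τ : ℂ := -1 / a + I / (a ^ 2 * s) with hτ_def
  have hτ : 0 < τ.im := im_neg_one_div_add_I_div_pos ha hs
  rw [jacobiTheta₂_eq_sum_range a 0 hτ, mul_sum]
  refine sum_congr rfl fun r _ => ?_
  rw [show (a : ℂ) * 0 + r * a * τ = I * r / (a * s) + (-r : ℤ) by
      rw [hτ_def]; push_cast; field_simp; ring,
    show (a : ℂ) ^ 2 * τ = I / s + 2 * (-b : ℤ) by
      rw [hτ_def, Int.cast_neg, hb']; field_simp; ring,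
    jacobiTheta₂_add_intCast_left, jacobiTheta₂_add_two_mul_intCast_right, jacobiTheta₂_I_div hs,
    show -I * s * (I * r / (a * s)) = r / a by field_simp; ring_nf; rw [I_sq]; ring]
  have hexp : cexp (2 * π * I * r * 0 + π * I * r ^ 2 * τ) * cexp (-π * s * (I * r / (a * s)) ^ 2)
      = cexp (-π * I * r ^ 2 / a) := by
    rw [← exp_add, hτ_def]; congr 1; field_simp; ring_nf
  linear_combination (Real.sqrt s * jacobiTheta₂ (r / a) (I * s)) * hexp

lemma jacobiTheta₂_zero_one_div_add_eq_mul {a : ℕ} (ha : 0 < a) (hae : Even a) {s : ℝ}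
    (hs : 0 < s) :
    jacobiTheta₂ 0 (1 / a + I * s) =
      cexp (π * I / 4) / (Real.sqrt a * Real.sqrt s) *
        jacobiTheta₂ 0 (-1 / a + I / (a ^ 2 * s)) := by
  obtain ⟨b, hb⟩ := hae
  have ha₀ : (a : ℂ) ≠ 0 := Nat.cast_ne_zero.mpr ha.ne'
  have hs₀ : (s : ℂ) ≠ 0 := ofReal_ne_zero.mpr hs.ne'
  have hb' : ((b : ℤ) : ℂ) = a / 2 := by rw [hb]; push_cast; ring
  set τ : ℂ := -1 / a + I / (a ^ 2 * s) with hτ_def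
  have hquot : 1 / a + I * s = τ / (2 * (b : ℤ) * τ + 1) := by
    rw [hτ_def, hb']; field_simp; ring_nf; rw [I_sq]; ring
  have hfactor : 2 * ((b : ℤ) : ℂ) * τ + 1 = (((a * s)⁻¹ : ℝ) : ℂ) * I := by
    rw [hτ_def, hb']; push_cast; field_simp; ring
  rw [hquot, jacobiTheta₂_zero_div_two_mul_add_one b (im_neg_one_div_add_I_div_pos ha hs), hfactor,
    ofReal_mul_I_cpow_one_half (by positivity), Real.sqrt_inv, Real.sqrt_mul (Nat.cast_nonneg a)]
  push_cast
  ring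

lemma tendsto_jacobiTheta₂_comap_im_atTop (z : ℂ) :
    Tendsto (jacobiTheta₂ z) (comap im atTop) (𝓝 1) := by
  have hlim : Tendsto (fun τ => ∑' n : ℤ, jacobiTheta₂_term n z τ) (comap im atTop)
      (𝓝 (∑' n : ℤ, if n = 0 then 1 else 0)) := by
    refine tendsto_tsum_of_dominated_convergence
      (bound := fun n : ℤ => Real.exp (-π * (1 * n ^ 2 - 2 * (|z.im| + 1) * |n|))) ?_ ?_ ?_
    · simpa using summable_pow_mul_jacobiTheta₂_term_bound (|z.im| + 1) one_pos 0
    · intro n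
      rcases eq_or_ne n 0 with rfl | hn
      · simpa [jacobiTheta₂_term] using tendsto_const_nhds
      · have hn' : (n : ℝ) ≠ 0 := Int.cast_ne_zero.mpr hn
        have hc : -π * (n : ℝ) ^ 2 < 0 := by
          have := pow_pos (abs_pos.mpr hn') 2
          rw [sq_abs] at this
          nlinarith [Real.pi_pos]
        simp only [hn, if_false]
        refine tendsto_zero_iff_norm_tendsto_zero.mpr ?_
        simp_rw [norm_jacobiTheta₂_term, sub_eq_add_neg]
        exact Real.tendsto_exp_atBot.comp
          (tendsto_atBot_add_const_right _ _ (tendsto_comap.const_mul_atTop_of_neg hc))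
    · filter_upwards [tendsto_comap.eventually_ge_atTop 1] with τ hτ n
      exact norm_jacobiTheta₂_term_le one_pos (by linarith) hτ n
  rw [tsum_ite_eq] at hlim
  exact hlim

lemma sum_range_cexp_neg_pi_I_sq_div {a : ℕ} (ha : 0 < a) (hae : Even a) :
    ∑ r ∈ range a, cexp (-π * I * r ^ 2 / a) = Real.sqrt a * cexp (-π * I / 4) := by
  have heq : ∀ s : ℝ, 0 < s →
      ∑ r ∈ range a, cexp (-π * I * r ^ 2 / a) * jacobiTheta₂ (r / a) (I * s) =
        Real.sqrt a * cexp (-π * I / 4) * jacobiTheta₂ 0 (1 / a + I * s) := fun s hs => by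
    have : (Real.sqrt s : ℂ) ≠ 0 := ofReal_ne_zero.mpr (Real.sqrt_pos.mpr hs).ne'
    have : (Real.sqrt a : ℂ) ≠ 0 := ofReal_ne_zero.mpr (Real.sqrt_pos.mpr (Nat.cast_pos.mpr ha)).ne'
    rw [jacobiTheta₂_zero_one_div_add_eq_mul ha hae hs,
      jacobiTheta₂_zero_neg_one_div_add_eq_sum ha hae hs, neg_mul, neg_div, exp_neg]
    field_simp
  have him : ∀ c : ℂ, c.im = 0 → Tendsto (fun s : ℝ => c + I * s) atTop (comap im atTop) :=
    fun c hc => tendsto_comap_iff.mpr (tendsto_id.congr fun s => by simp [hc])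
  have hL : Tendsto (fun s : ℝ => ∑ r ∈ range a, cexp (-π * I * r ^ 2 / a) *
      jacobiTheta₂ (r / a) (I * s)) atTop (𝓝 (∑ r ∈ range a, cexp (-π * I * r ^ 2 / a) * 1)) :=
    tendsto_finsetSum _ fun r _ => tendsto_const_nhds.mul
      ((tendsto_jacobiTheta₂_comap_im_atTop _).comp (by simpa using him 0 rfl))
  have hR : Tendsto (fun s : ℝ => Real.sqrt a * cexp (-π * I / 4) *
      jacobiTheta₂ 0 (1 / a + I * s)) atTop (𝓝 (Real.sqrt a * cexp (-π * I / 4) * 1)) :=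
    tendsto_const_nhds.mul ((tendsto_jacobiTheta₂_comap_im_atTop 0).comp (him _ (by simp)))
  simpa using tendsto_nhds_unique (hL.congr' ((eventually_gt_atTop 0).mono heq)) hR

theorem Function.Periodic.sum_range_comp_add {M : Type*} [AddCommMonoid M] {f : ℤ → M} {a : ℕ}
    (hf : Function.Periodic f a) (c : ℤ) :
    ∑ n ∈ range a, f (n + c) = ∑ n ∈ range a, f n := by
  have hstep : ∀ g : ℤ → M, Function.Periodic g a →
      ∑ n ∈ range a, g (n + 1) = ∑ n ∈ range a, g n := by
    intro g hg
    rcases a with _ | m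
    · simp
    · rw [sum_range_succ, sum_range_succ', Nat.cast_zero, ← hg 0]
      simp only [Nat.cast_add, Nat.cast_one, zero_add]
  induction c using Int.induction_on with
  | zero => simp
  | succ c ih =>
    rw [← ih, ← hstep _ (hf.add_const c)]
    exact sum_congr rfl fun n _ => congr_arg f (by ring)
  | pred c ih =>
    rw [← ih, ← hstep _ (hf.add_const (-c - 1))]
    exact sum_congr rfl fun n _ => congr_arg f (by ring)

lemma periodic_cexp_neg_pi_I_sq_div {a : ℕ} (hae : Even a) :
    Function.Periodic (fun m : ℤ => cexp (-π * I * m ^ 2 / a)) a := by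
  obtain ⟨b, rfl⟩ := hae
  intro m
  rcases Nat.eq_zero_or_pos b with rfl | hb
  · simp
  have hb₀ : (b : ℂ) ≠ 0 := Nat.cast_ne_zero.mpr hb.ne'
  refine exp_eq_exp_iff_exists_int.mpr ⟨-(m + b), ?_⟩
  push_cast
  field_simp
  ring

/-- Let `a` be an even positive integer and `d` an integer. Then
`∑_{n=0}^{a-1} e^{iπ(2dn - n²)/a} = √a · e^{iπ(d²/a - 1/4)}`,
where `√a` is the positive real square root of `a`. -/
theorem stmt6 (a : ℕ) (ha : 0 < a) (hae : Even a) (d : ℤ) :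
    ∑ n ∈ Finset.range a,
        Complex.exp (Complex.I * Real.pi * (2 * (d : ℂ) * (n : ℂ) - (n : ℂ) ^ 2) / (a : ℂ)) =
      (Real.sqrt a : ℂ) *
        Complex.exp (Complex.I * Real.pi * ((d : ℂ) ^ 2 / (a : ℂ) - 1 / 4)) := by
  have hshift := (periodic_cexp_neg_pi_I_sq_div hae).sum_range_comp_add (-d)
  push_cast at hshift
  have hsquare : ∀ n : ℕ, cexp (I * π * (2 * d * n - n ^ 2) / a) =
      cexp (I * π * d ^ 2 / a) * cexp (-π * I * (n + -d) ^ 2 / a) := fun n => by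
    rw [← exp_add]; congr 1; field_simp; ring
  rw [sum_congr rfl fun n _ => hsquare n, ← mul_sum, hshift, sum_range_cexp_neg_pi_I_sq_div ha hae,
    mul_left_comm, ← exp_add]
  congr 2
  ring
end

section
/- Let a > 0, let ℏ > 0, and let s, t be real numbers with 0 < tℏ < a and e^{isa} ≠ 1. For x ∈ [0,a) write τ(x) = x + tℏ - a·⌊(x+tℏ)/a⌋ (translation by tℏ with wraparound). Then for every x ∈ [0,a) with x + tℏ ≥ a, e^{isx} ≠ e^{-istℏ} · e^{is·τ(x)}. Consequently, for the multiplication operator (M_s f)(x) = e^{isx} f(x) and the wraparound translation operator (T_t f)(x) = f(τ(x)) on functions on [0,a), the Weyl commutation relation M_s ∘ T_t = e^{-istℏ} · (T_t ∘ M_s) fails: the two sides differ, applied to the constant function 1, at every point x ∈ [a - tℏ, a). -/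
open Complex

/- On `[a - tℏ, a)` the wraparound translation subtracts exactly one period, `τ x = x + tℏ - a`,
so the Weyl relation at `x` would reduce to `e^{isx} = e^{isx} e^{-isa}`, i.e. `e^{isa} = 1`. -/

theorem sub_mul_floor_div_eq_sub_self {a y : ℝ} (hay : a ≤ y) (hya : y < 2 * a) :
    y - a * ⌊y / a⌋ = y - a := by
  have ha : 0 < a := by linarith
  have hfloor : ⌊y / a⌋ = 1 := by
    rw [Int.floor_eq_iff, Int.cast_one, le_div_iff₀ ha, div_lt_iff₀ ha]
    constructor <;> linarith
  rw [hfloor, Int.cast_one, mul_one]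

theorem Complex.exp_ne_exp_neg_mul_exp_add_sub {z w u : ℂ} (hu : exp u ≠ 1) :
    exp z ≠ exp (-w) * exp (z + w - u) := by
  intro h
  apply hu
  have hshift : exp (-w) * exp (z + w - u) = exp z * exp (-u) := by
    rw [← exp_add, ← exp_add]
    ring_nf
  rw [hshift, eq_comm, mul_eq_left₀ (exp_ne_zero z), exp_neg, inv_eq_one] at h
  exact h

theorem stmt14_general (a ℏ s t : ℝ)
    (htℏa : t * ℏ < a)
    (hsa : Complex.exp (Complex.I * (s : ℂ) * (a : ℂ)) ≠ 1)
    (τ : ℝ → ℝ) (hτ : ∀ x : ℝ, τ x = x + t * ℏ - a * ⌊(x + t * ℏ) / a⌋)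
    (M T : (ℝ → ℂ) → (ℝ → ℂ))
    (hM : ∀ (f : ℝ → ℂ) (x : ℝ), M f x = Complex.exp (Complex.I * (s : ℂ) * (x : ℂ)) * f x)
    (hT : ∀ (f : ℝ → ℂ) (x : ℝ), T f x = f (τ x)) :
    (∀ x : ℝ, 0 ≤ x → x < a → a ≤ x + t * ℏ →
      Complex.exp (Complex.I * (s : ℂ) * (x : ℂ)) ≠
        Complex.exp (-(Complex.I * (s : ℂ) * ((t * ℏ : ℝ) : ℂ))) *
          Complex.exp (Complex.I * (s : ℂ) * ((τ x : ℝ) : ℂ))) ∧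
    (∀ x : ℝ, a - t * ℏ ≤ x → x < a →
      M (T (fun _ => 1)) x ≠
        Complex.exp (-(Complex.I * (s : ℂ) * ((t * ℏ : ℝ) : ℂ))) * T (M (fun _ => 1)) x) := by
  have pointwise : ∀ x : ℝ, 0 ≤ x → x < a → a ≤ x + t * ℏ →
      Complex.exp (Complex.I * (s : ℂ) * (x : ℂ)) ≠
        Complex.exp (-(Complex.I * (s : ℂ) * ((t * ℏ : ℝ) : ℂ))) *
          Complex.exp (Complex.I * (s : ℂ) * ((τ x : ℝ) : ℂ)) := by
    intro x _ hxa hax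
    have hτx : τ x = x + t * ℏ - a := by
      rw [hτ, sub_mul_floor_div_eq_sub_self hax (by linarith)]
    convert Complex.exp_ne_exp_neg_mul_exp_add_sub hsa using 3
    rw [hτx]
    push_cast
    ring
  refine ⟨pointwise, fun x hx hxa => ?_⟩
  simp only [hM, hT, mul_one]
  exact pointwise x (by linarith) hxa (by linarith)

/-- Let `a > 0`, `ℏ > 0`, and `s, t` reals with `0 < tℏ < a` and
`e^{isa} ≠ 1`. Write `τ(x) = x + tℏ - a·⌊(x+tℏ)/a⌋` (translation by `tℏ` with wraparound).
Then for every `x ∈ [0,a)` with `x + tℏ ≥ a`, `e^{isx} ≠ e^{-istℏ}·e^{is·τ(x)}`.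
Consequently, for the multiplication operator `(M f)(x) = e^{isx} f(x)` and the wraparound
translation `(T f)(x) = f(τ(x))`, the Weyl relation `M ∘ T = e^{-istℏ}·(T ∘ M)` fails:
the two sides, applied to the constant function `1`, differ at every `x ∈ [a - tℏ, a)`. -/
theorem stmt14 (a ℏ s t : ℝ) (ha : 0 < a) (hℏ : 0 < ℏ)
    (htℏ : 0 < t * ℏ) (htℏa : t * ℏ < a)
    (hsa : Complex.exp (Complex.I * (s : ℂ) * (a : ℂ)) ≠ 1)
    (τ : ℝ → ℝ) (hτ : ∀ x : ℝ, τ x = x + t * ℏ - a * ⌊(x + t * ℏ) / a⌋)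
    (M T : (ℝ → ℂ) → (ℝ → ℂ))
    (hM : ∀ (f : ℝ → ℂ) (x : ℝ), M f x = Complex.exp (Complex.I * (s : ℂ) * (x : ℂ)) * f x)
    (hT : ∀ (f : ℝ → ℂ) (x : ℝ), T f x = f (τ x)) :
    (∀ x : ℝ, 0 ≤ x → x < a → a ≤ x + t * ℏ →
      Complex.exp (Complex.I * (s : ℂ) * (x : ℂ)) ≠
        Complex.exp (-(Complex.I * (s : ℂ) * ((t * ℏ : ℝ) : ℂ))) *
          Complex.exp (Complex.I * (s : ℂ) * ((τ x : ℝ) : ℂ))) ∧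
    (∀ x : ℝ, a - t * ℏ ≤ x → x < a →
      M (T (fun _ => 1)) x ≠
        Complex.exp (-(Complex.I * (s : ℂ) * ((t * ℏ : ℝ) : ℂ))) * T (M (fun _ => 1)) x) :=
  stmt14_general a ℏ s t htℏa hsa τ hτ M T hM hT
end
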